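/- arXiv:2102.12879 — 2 statements merged into one kernel-verified Lean document; each statement's English description precedes it below -/
import Mathlib

section
/- Let (E, f, w, W) be an MSK instance, let A be the output of a greedy execution on it, and let V be the associated value function. Let S* ⊆ E be nonempty with w(S*) ≤ W and f_∅(S*) > 0. Then for every u ∈ [0, min( W − max_{e∈S*} w(e), w(A) )] it holds that V(u) ≥ (1 − exp(−u/W))·f(S*). -/
open Finset

variable {α : Type*}

/-- A set function `f` is submodular on ground set `E`. -/
def SubmodularOn [DecidableEq α] (E : Finset α) (f : Finset α → ℝ) : Prop :=
  ∀ A B : Finset α, A ⊆ B → B ⊆ E → ∀ e ∈ E, e ∉ B →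
    f (insert e B) - f B ≤ f (insert e A) - f A

/-- A set function `f` is monotone on ground set `E`. -/
def MonotoneOnSets (E : Finset α) (f : Finset α → ℝ) : Prop :=
  ∀ S T : Finset α, S ⊆ T → T ⊆ E → f S ≤ f T

/-- A set function `f` is non-negative on ground set `E`. -/
def NonnegOn (E : Finset α) (f : Finset α → ℝ) : Prop :=
  ∀ S : Finset α, S ⊆ E → 0 ≤ f S

/-- Total weight of a set. -/
def wt (w : α → ℝ) (S : Finset α) : ℝ := ∑ e ∈ S, w e

/-- Marginal value `f_A(S) = f(A ∪ S) - f(A)`. -/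
def marginal [DecidableEq α] (f : Finset α → ℝ) (A S : Finset α) : ℝ := f (A ∪ S) - f A

/-- A greedy execution on the MSK instance `(E, f, w, W)`: an ordering `e_1, …, e_n`
of the elements of `E` (here `order`, 0-indexed) together with sets
`sol 0 = ∅ ⊆ sol 1 ⊆ … ⊆ sol n` such that at every step the considered element maximizes
the marginal density among the remaining elements, and it is added iff it fits. -/
structure GreedyExec [DecidableEq α] (E : Finset α) (f : Finset α → ℝ) (w : α → ℝ)
    (W : ℝ) where
  order : List α
  nodup : order.Nodup
  ground : order.toFinset = E
  sol : ℕ → Finset α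
  sol_zero : sol 0 = ∅
  greedy_max : ∀ (i : ℕ) (hi : i < order.length), ∀ e ∈ order.drop i,
    marginal f (sol i) {e} / w e ≤
      marginal f (sol i) {order.get ⟨i, hi⟩} / w (order.get ⟨i, hi⟩)
  step_add : ∀ (i : ℕ) (hi : i < order.length),
    wt w (sol i) + w (order.get ⟨i, hi⟩) ≤ W →
      sol (i + 1) = insert (order.get ⟨i, hi⟩) (sol i)
  step_skip : ∀ (i : ℕ) (hi : i < order.length),
    W < wt w (sol i) + w (order.get ⟨i, hi⟩) → sol (i + 1) = sol i

/-- The output of a greedy execution. -/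
def GreedyExec.out [DecidableEq α] {E : Finset α} {f : Finset α → ℝ} {w : α → ℝ} {W : ℝ}
    (g : GreedyExec E f w W) : Finset α := g.sol g.order.length

/-!
Let `A_i` be the greedy solution before step `i` and `ρ_i` the density of the element considered
at step `i`, i.e. the slope of `V` on its `i`-th piece. While `w(A_i) ≤ W - max_{e∈S*} w(e)`,
every element of `S* \ A_i` would still fit, so it has not been considered yet and its density is
at most `ρ_i`; by monotonicity and submodularity
`f(S*) - f(A_i) ≤ ∑_{e∈S*} f_{A_i}({e}) ≤ w(S*) ρ_i ≤ W ρ_i`.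
Hence along each piece the deficit `f(S*) - V(u)` shrinks at rate at least `deficit / W`, and
`1 - t ≤ exp (-t)` turns this into `f(S*) - V(u) ≤ exp (-u/W) f(S*)`.
-/

open Real

section SetFunction

variable [DecidableEq α] {E : Finset α} {f : Finset α → ℝ}

theorem marginal_singleton (f : Finset α → ℝ) (A : Finset α) (e : α) :
    marginal f A {e} = f (insert e A) - f A := by
  rw [marginal, union_comm, ← insert_eq]

theorem marginal_nonneg (hmono : MonotoneOnSets E f) {A S : Finset α} (hA : A ⊆ E)
    (hS : S ⊆ E) : 0 ≤ marginal f A S :=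
  sub_nonneg.2 (hmono A (A ∪ S) subset_union_left (union_subset hA hS))

theorem marginal_le_sum_marginal_singleton (hmono : MonotoneOnSets E f)
    (hsub : SubmodularOn E f) {A T : Finset α} (hA : A ⊆ E) (hT : T ⊆ E) :
    marginal f A T ≤ ∑ e ∈ T, marginal f A {e} := by
  induction T using Finset.induction_on with
  | empty => simp [marginal]
  | @insert e T he ih =>
    have heE : e ∈ E := hT (mem_insert_self e T)
    have hTE : T ⊆ E := (subset_insert e T).trans hT
    have hstep : f (A ∪ insert e T) - f (A ∪ T) ≤ marginal f A {e} := by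
      rw [union_insert, marginal_singleton]
      by_cases heAT : e ∈ A ∪ T
      · rw [insert_eq_of_mem heAT, sub_self, ← marginal_singleton]
        exact marginal_nonneg hmono hA (singleton_subset_iff.2 heE)
      · exact hsub A (A ∪ T) subset_union_left (union_subset hA hTE) e heE heAT
    rw [sum_insert he]
    have := ih hTE
    rw [marginal] at this ⊢
    linarith

theorem sub_le_mul_of_marginal_singleton_le (hmono : MonotoneOnSets E f)
    (hsub : SubmodularOn E f) {w : α → ℝ} {W ρ : ℝ} {A S : Finset α} (hA : A ⊆ E)
    (hS : S ⊆ E) (hρ : 0 ≤ ρ) (hSW : wt w S ≤ W)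
    (hle : ∀ e ∈ S, marginal f A {e} ≤ w e * ρ) :
    f S - f A ≤ W * ρ :=
  calc f S - f A ≤ marginal f A S :=
        sub_le_sub_right (hmono S (A ∪ S) subset_union_right (union_subset hA hS)) _
    _ ≤ ∑ e ∈ S, marginal f A {e} := marginal_le_sum_marginal_singleton hmono hsub hA hS
    _ ≤ ∑ e ∈ S, w e * ρ := sum_le_sum hle
    _ = wt w S * ρ := (sum_mul S w ρ).symm
    _ ≤ W * ρ := mul_le_mul_of_nonneg_right hSW hρ

end SetFunction

theorem one_sub_exp_mul_le_add_mul {W a v c F ρ : ℝ} (hW : 0 < W) (hc : 0 ≤ c)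
    (hρ : 0 ≤ ρ) (hav : a ≤ v) (hgap : c - F ≤ W * ρ)
    (ha : (1 - exp (-a / W)) * c ≤ F) :
    (1 - exp (-v / W)) * c ≤ F + (v - a) * ρ := by
  have hrise : 0 ≤ (v - a) * ρ := mul_nonneg (sub_nonneg.2 hav) hρ
  rcases le_or_gt c F with hcF | hFc
  · nlinarith [exp_pos (-v / W)]
  set t := (v - a) / W
  have hsplit : exp (-v / W) = exp (-a / W) * exp (-t) := by
    rw [← exp_add]; congr 1; simp only [t]; field_simp; ring
  have hdeficit : c - F ≤ c * exp (-a / W) := by linarith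
  have hslope : t * (c - F) ≤ (v - a) * ρ := by
    rw [div_mul_eq_mul_div, div_le_iff₀ hW]
    nlinarith [sub_nonneg.2 hav]
  calc (1 - exp (-v / W)) * c = c - c * exp (-a / W) * exp (-t) := by rw [hsplit]; ring
    _ ≤ c - (c - F) * exp (-t) := by gcongr
    _ ≤ c - (c - F) * (1 - t) := by
        gcongr
        linarith [add_one_le_exp (-t)]
    _ = F + t * (c - F) := by ring
    _ ≤ F + (v - a) * ρ := by linarith

theorem one_sub_exp_mul_le_of_piecewise_linear {n : ℕ} (hn : 0 < n) {u F ρ : ℕ → ℝ}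
    {V : ℝ → ℝ} {W U c : ℝ} (hW : 0 < W) (hc : 0 ≤ c) (hu0 : u 0 = 0) (hF0 : 0 ≤ F 0)
    (hu : ∀ i < n, u i ≤ u (i + 1)) (hρ : ∀ i < n, 0 ≤ ρ i)
    (hV : ∀ i < n, ∀ v, u i ≤ v → v ≤ u (i + 1) → V v = F i + (v - u i) * ρ i)
    (hgap : ∀ i < n, u i < U → c - F i ≤ W * ρ i)
    {v : ℝ} (hv0 : 0 ≤ v) (hvU : v ≤ U) (hvn : v ≤ u n) :
    (1 - exp (-v / W)) * c ≤ V v := by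
  have hVu : ∀ i < n, V (u i) = F i := fun i hi => by
    rw [hV i hi (u i) le_rfl (hu i hi), sub_self, zero_mul, add_zero]
  have hu_nonneg : ∀ i ≤ n, 0 ≤ u i := by
    intro i hi
    induction i with
    | zero => exact hu0.ge
    | succ i ih => exact (ih (by omega)).trans (hu i (by omega))
  suffices ∀ i ≤ n, ∀ v, 0 ≤ v → v ≤ U → v ≤ u i → (1 - exp (-v / W)) * c ≤ V v from
    this n le_rfl v hv0 hvU hvn
  intro i
  induction i with
  | zero =>
    intro _ v hv0 _ hv
    obtain rfl : v = 0 := le_antisymm (hu0 ▸ hv) hv0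
    rw [← hu0, hVu 0 hn, hu0, neg_zero, zero_div, exp_zero, sub_self, zero_mul]
    exact hF0
  | succ i ih =>
    intro hi v hv0 hvU hvi
    rcases le_or_gt v (u i) with hle | hlt
    · exact ih (by omega) v hv0 hvU hle
    have hIH := hVu i hi ▸ ih (by omega) (u i) (hu_nonneg i (by omega)) (hlt.le.trans hvU) le_rfl
    rw [hV i hi v hlt.le hvi]
    exact one_sub_exp_mul_le_add_mul hW hc (hρ i hi) hlt.le (hgap i hi (hlt.trans_le hvU)) hIH

namespace GreedyExec

variable [DecidableEq α] {E : Finset α} {f : Finset α → ℝ} {w : α → ℝ} {W : ℝ}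
  (g : GreedyExec E f w W)

theorem mem_order_iff {e : α} : e ∈ g.order ↔ e ∈ E := by
  rw [← List.mem_toFinset, g.ground]

theorem get_mem (i : ℕ) (hi : i < g.order.length) : g.order.get ⟨i, hi⟩ ∈ E :=
  g.mem_order_iff.1 (List.get_mem _ _)

theorem sol_succ_eq_insert_or_eq (i : ℕ) (hi : i < g.order.length) :
    g.sol (i + 1) = insert (g.order.get ⟨i, hi⟩) (g.sol i) ∨ g.sol (i + 1) = g.sol i :=
  (le_or_gt _ W).imp (g.step_add i hi) (g.step_skip i hi)

theorem sol_subset_succ (i : ℕ) (hi : i < g.order.length) : g.sol i ⊆ g.sol (i + 1) := by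
  rcases g.sol_succ_eq_insert_or_eq i hi with h | h <;> rw [h]
  exact subset_insert _ _

theorem sol_subset_ground : ∀ i ≤ g.order.length, g.sol i ⊆ E
  | 0, _ => by simp [g.sol_zero]
  | i + 1, hi => by
    rcases g.sol_succ_eq_insert_or_eq i hi with h | h <;> rw [h]
    · exact insert_subset (g.get_mem i hi) (sol_subset_ground i (by omega))
    · exact sol_subset_ground i (by omega)

theorem sol_mono {i j : ℕ} (hij : i ≤ j) (hj : j ≤ g.order.length) : g.sol i ⊆ g.sol j := by
  induction j, hij using Nat.le_induction with
  | base => exact subset_rfl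
  | succ j _ ih => exact (ih (by omega)).trans (g.sol_subset_succ j hj)

theorem wt_sol_zero : wt w (g.sol 0) = 0 := by
  rw [g.sol_zero, wt, sum_empty]

theorem wt_sol_mono (hw : ∀ e ∈ E, 0 < w e) {i j : ℕ} (hij : i ≤ j) (hj : j ≤ g.order.length) :
    wt w (g.sol i) ≤ wt w (g.sol j) :=
  sum_le_sum_of_subset_of_nonneg (g.sol_mono hij hj) fun e he _ =>
    (hw e (g.sol_subset_ground j hj he)).le

theorem mem_drop_of_notMem_sol (hw : ∀ e ∈ E, 0 < w e) {i : ℕ} (hi : i ≤ g.order.length) {e : α} (he : e ∈ E)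
    (hes : e ∉ g.sol i) (hfit : wt w (g.sol i) + w e ≤ W) : e ∈ g.order.drop i := by
  obtain ⟨k, hk, rfl⟩ := List.mem_iff_getElem.1 (g.mem_order_iff.2 he)
  rcases lt_or_ge k i with hki | hik
  · have hfit' : wt w (g.sol k) + w (g.order.get ⟨k, hk⟩) ≤ W := by
      have := g.wt_sol_mono hw hki.le hi
      simp only [List.get_eq_getElem]
      linarith
    exact absurd (g.sol_mono hki hi (g.step_add k hk hfit' ▸ mem_insert_self _ _)) hes
  · obtain ⟨d, rfl⟩ := Nat.exists_eq_add_of_le hik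
    exact List.mem_drop_iff_getElem.2 ⟨d, by omega, rfl⟩

noncomputable def slope (i : ℕ) : ℝ :=
  if hi : i < g.order.length then
    marginal f (g.sol i) {g.order.get ⟨i, hi⟩} / w (g.order.get ⟨i, hi⟩)
  else 0

theorem slope_of_lt {i : ℕ} (hi : i < g.order.length) :
    g.slope i = marginal f (g.sol i) {g.order.get ⟨i, hi⟩} / w (g.order.get ⟨i, hi⟩) :=
  dif_pos hi

theorem slope_nonneg (hmono : MonotoneOnSets E f) (hw : ∀ e ∈ E, 0 < w e) (i : ℕ) :
    0 ≤ g.slope i := by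
  unfold slope
  split_ifs with hi
  · exact div_nonneg (marginal_nonneg hmono (g.sol_subset_ground i hi.le)
      (singleton_subset_iff.2 (g.get_mem i hi))) (hw _ (g.get_mem i hi)).le
  · exact le_rfl

theorem marginal_singleton_le_slope (hmono : MonotoneOnSets E f) (hw : ∀ e ∈ E, 0 < w e)
    {i : ℕ} (hi : i < g.order.length) {e : α} (he : e ∈ E)
    (hfit : wt w (g.sol i) + w e ≤ W) : marginal f (g.sol i) {e} ≤ w e * g.slope i := by
  by_cases hes : e ∈ g.sol i
  · rw [marginal_singleton, insert_eq_of_mem hes, sub_self]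
    exact mul_nonneg (hw e he).le (g.slope_nonneg hmono hw i)
  · rw [g.slope_of_lt hi, mul_comm, ← div_le_iff₀ (hw e he)]
    exact g.greedy_max i hi e (g.mem_drop_of_notMem_sol hw hi.le he hes hfit)

theorem sub_sol_le_mul_slope (hmono : MonotoneOnSets E f) (hsub : SubmodularOn E f)
    (hw : ∀ e ∈ E, 0 < w e) {S : Finset α} (hS : S ⊆ E) (hSW : wt w S ≤ W) {i : ℕ}
    (hi : i < g.order.length) (hfit : ∀ e ∈ S, wt w (g.sol i) + w e ≤ W) :
    f S - f (g.sol i) ≤ W * g.slope i :=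
  sub_le_mul_of_marginal_singleton_le hmono hsub (g.sol_subset_ground i hi.le) hS
    (g.slope_nonneg hmono hw i) hSW fun e he =>
      g.marginal_singleton_le_slope hmono hw hi (hS he) (hfit e he)

end GreedyExec

theorem value_function_sviridenko_bound_general [DecidableEq α]
    (E : Finset α) (f : Finset α → ℝ) (w : α → ℝ) (W : ℝ)
    (hf0 : NonnegOn E f) (hmono : MonotoneOnSets E f) (hsub : SubmodularOn E f)
    (hw : ∀ e ∈ E, 0 < w e) (hW : 0 < W)
    (g : GreedyExec E f w W)
    (V : ℝ → ℝ)
    (hV : ∀ (i : ℕ) (hi : i < g.order.length), ∀ u : ℝ,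
      wt w (g.sol i) ≤ u → u ≤ wt w (g.sol (i + 1)) →
      V u = f (g.sol i) + (u - wt w (g.sol i)) *
        (marginal f (g.sol i) {g.order.get ⟨i, hi⟩} / w (g.order.get ⟨i, hi⟩)))
    (Sstar : Finset α) (hSE : Sstar ⊆ E) (hSne : Sstar.Nonempty)
    (hSw : wt w Sstar ≤ W) :
    ∀ u : ℝ, 0 ≤ u → u ≤ min (W - Sstar.sup' hSne w) (wt w g.out) →
      (1 - Real.exp (-u / W)) * f Sstar ≤ V u := by
  intro u hu0 hu
  have hn : 0 < g.order.length := by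
    obtain ⟨e, he⟩ := hSne
    exact List.length_pos_of_mem (g.mem_order_iff.2 (hSE he))
  refine one_sub_exp_mul_le_of_piecewise_linear hn (u := fun i => wt w (g.sol i))
    (F := fun i => f (g.sol i)) (ρ := g.slope) hW (hf0 Sstar hSE) g.wt_sol_zero
    (g.sol_zero ▸ hf0 ∅ (empty_subset E)) (fun i hi => g.wt_sol_mono hw i.le_succ hi)
    (fun i _ => g.slope_nonneg hmono hw i) (fun i hi v h₁ h₂ => ?_) (fun i hi hiU => ?_)
    hu0 (hu.trans (min_le_left _ _)) (hu.trans (min_le_right _ _))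
  · rw [hV i hi v h₁ h₂, g.slope_of_lt hi]
  · refine g.sub_sol_le_mul_slope hmono hsub hw hSE hSw hi fun e he => ?_
    linarith [le_sup' w he]

/-- k = 1 case of the bounding-function lemma; Sviridenko's analysis:
if `V` is the value function of a greedy execution with output `A`, and `S* ⊆ E` is
nonempty with `w(S*) ≤ W` and `f_∅(S*) > 0`, then for every
`u ∈ [0, min(W - max_{e∈S*} w(e), w(A))]` we have `V(u) ≥ (1 - exp(-u/W))·f(S*)`. -/
theorem value_function_sviridenko_bound [DecidableEq α]
    (E : Finset α) (f : Finset α → ℝ) (w : α → ℝ) (W : ℝ)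
    (hf0 : NonnegOn E f) (hmono : MonotoneOnSets E f) (hsub : SubmodularOn E f)
    (hw : ∀ e ∈ E, 0 < w e) (hW : 0 < W)
    (g : GreedyExec E f w W)
    (V : ℝ → ℝ)
    (hV : ∀ (i : ℕ) (hi : i < g.order.length), ∀ u : ℝ,
      wt w (g.sol i) ≤ u → u ≤ wt w (g.sol (i + 1)) →
      V u = f (g.sol i) + (u - wt w (g.sol i)) *
        (marginal f (g.sol i) {g.order.get ⟨i, hi⟩} / w (g.order.get ⟨i, hi⟩)))
    (Sstar : Finset α) (hSE : Sstar ⊆ E) (hSne : Sstar.Nonempty)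
    (hSw : wt w Sstar ≤ W) (hSpos : 0 < marginal f ∅ Sstar) :
    ∀ u : ℝ, 0 ≤ u → u ≤ min (W - Sstar.sup' hSne w) (wt w g.out) →
      (1 - Real.exp (-u / W)) * f Sstar ≤ V u :=
  value_function_sviridenko_bound_general E f w W hf0 hmono hsub hw hW g V hV Sstar hSE hSne hSw
end

section
/- Enumeration over pairs suffices for a (1 − e^{−1})-approximation: Let (E, f, w, W) be an MSK instance and let Y ⊆ E be a feasible set (w(Y) ≤ W). Then there exists a set G ⊆ E with |G| ≤ 2 and w(G) ≤ W such that for every greedy execution on the MSK instance (E, f_G, w, W − w(G)) with output A, it holds that f(G ∪ A) ≥ (1 − e^{−1})·f(Y). -/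
open Finset

variable {α : Type*}

/-!
Let `y₁ ∈ Y` maximize `f {y₁}` and `y₂` maximize the marginal value over `{y₁}`, and put
`G = {y₁, y₂}`. By submodularity every other `y ∈ Y` has `f_G {y} ≤ f G - f {y₁} ≤ f G / 2`.
Run greedy on `f_G` and let `e` be the first element of `T = Y \ G` it rejects. Before that,
every element of `T` it has seen was accepted, so each step closes the gap
`f_G (T \ {e}) - f_G (sol)` at rate at least (weight added) / `w(T \ {e})`, and the gap decays
like `exp (-w(sol) / w(T \ {e}))`. At the rejection `w(sol) > W - w(G) - w(e) ≥ w(T \ {e})`,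
so greedy gets `(1 - e⁻¹) f_G (T \ {e})`. Dropping `e` loses at most `f G / 2`, which the
value `f G` already in hand covers because `(3/2) (1 - e⁻¹) ≤ 1`.
-/

namespace SubmodularOn

variable [DecidableEq α] {E : Finset α} {f : Finset α → ℝ}

theorem marginal_singleton_anti (hsub : SubmodularOn E f) {A B : Finset α} {e : α}
    (hAB : A ⊆ B) (hBE : B ⊆ E) (he : e ∈ E) (heB : e ∉ B) :
    marginal f B {e} ≤ marginal f A {e} := by
  simpa only [marginal, union_singleton] using hsub A B hAB hBE e he heB

theorem marginal_le_sum (hsub : SubmodularOn E f) (U : Finset α) {T : Finset α}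
    (hUT : U ∪ T ⊆ E) : marginal f U T ≤ ∑ y ∈ T, marginal f U {y} := by
  induction T using Finset.induction_on with
  | empty => simp [marginal]
  | @insert a T haT ih =>
    rw [sum_insert haT]
    have hUT' : U ∪ T ⊆ E := (union_subset_union_right (subset_insert a T)).trans hUT
    have haE : a ∈ E := hUT (mem_union_right U (mem_insert_self a T))
    have hstep : f (insert a (U ∪ T)) - f (U ∪ T) ≤ marginal f U {a} := by
      by_cases haU : a ∈ U
      · simp [marginal, haU, mem_union]
      · have := hsub.marginal_singleton_anti subset_union_left hUT' haE (by simp [haU, haT])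
        simpa only [marginal, union_singleton] using this
    have := ih hUT'
    simp only [marginal, union_insert] at this hstep ⊢
    linarith

theorem marginal (hsub : SubmodularOn E f) {G : Finset α} (hG : G ⊆ E) :
    SubmodularOn E (marginal f G) := by
  intro A B hAB hBE e he heB
  by_cases heG : e ∈ G
  · simp [_root_.marginal, heG]
  · have := hsub.marginal_singleton_anti (union_subset_union_right hAB) (union_subset hG hBE) he
      (by simp [heG, heB])
    simp only [_root_.marginal, union_singleton, union_insert] at this ⊢
    linarith

end SubmodularOn

theorem MonotoneOnSets.marginal {E : Finset α} {f : Finset α → ℝ} [DecidableEq α]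
    (hmono : MonotoneOnSets E f) {G : Finset α} (hG : G ⊆ E) :
    MonotoneOnSets E (marginal f G) := fun S T hST hTE => by
  have := hmono (G ∪ S) (G ∪ T) (union_subset_union_right hST) (union_subset hG hTE)
  simp only [_root_.marginal]
  linarith

theorem exists_subset_card_le_two_marginal_le_half [DecidableEq α] {E Y : Finset α}
    {f : Finset α → ℝ} (hsub : SubmodularOn E f) (hf0 : 0 ≤ f ∅) (hY : Y ⊆ E) :
    ∃ G ⊆ Y, G.card ≤ 2 ∧ ∀ y ∈ Y \ G, marginal f G {y} ≤ f G / 2 := by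
  by_cases hcard : Y.card ≤ 2
  · exact ⟨Y, subset_rfl, hcard, by simp⟩
  have hYne : Y.Nonempty := card_pos.1 (by omega)
  obtain ⟨y₁, hy₁, hy₁max⟩ := exists_max_image Y (fun y => f {y}) hYne
  have hY₁ne : (Y.erase y₁).Nonempty := by
    rw [← card_pos, card_erase_of_mem hy₁]
    omega
  obtain ⟨y₂, hy₂, hy₂max⟩ := exists_max_image (Y.erase y₁) (fun y => marginal f {y₁} {y}) hY₁ne
  obtain ⟨hy₂₁, hy₂Y⟩ := mem_erase.1 hy₂
  refine ⟨{y₁} ∪ {y₂}, union_subset (by simpa) (by simpa), card_union_le _ _, ?_⟩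
  intro y hy
  obtain ⟨hyY, hyG⟩ := mem_sdiff.1 hy
  have hGE : {y₁} ∪ {y₂} ⊆ E := union_subset (by simpa using hY hy₁) (by simpa using hY hy₂Y)
  have hy₁E : y₁ ∈ E := hY hy₁
  -- `f G ≤ f {y₁} + f {y₂} ≤ 2 f {y₁}`, and the choice of `y₂` gives
  -- `marginal f G {y} ≤ f G - f {y₁}`
  have hG : f ({y₁} ∪ {y₂}) - f {y₂} ≤ f {y₁} - f ∅ := by
    simpa [marginal, union_comm] using hsub.marginal_singleton_anti (empty_subset {y₂})
      (by simpa using hY hy₂Y) hy₁E (by simpa using hy₂₁.symm)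
  have hy : marginal f ({y₁} ∪ {y₂}) {y} ≤ marginal f {y₁} {y₂} := calc
    _ ≤ marginal f {y₁} {y} := hsub.marginal_singleton_anti subset_union_left hGE (hY hyY) hyG
    _ ≤ marginal f {y₁} {y₂} := hy₂max y (mem_erase.2 ⟨by rintro rfl; simp at hyG, hyY⟩)
  have := hy₁max y₂ hy₂Y
  simp only [marginal] at hy ⊢
  linarith

theorem sub_le_mul_exp_of_gap_mul_le {a x : ℕ → ℝ} {S D : ℝ} (hD : 0 < D) (hS : 0 ≤ S)
    (ha0 : a 0 = 0) (hx0 : x 0 = 0) {p : ℕ} (ha : ∀ n < p, a n ≤ a (n + 1))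
    (hstep : ∀ n < p, (S - a n) * (x (n + 1) - x n) ≤ (a (n + 1) - a n) * D) :
    S - a p ≤ S * Real.exp (-(x p / D)) := by
  induction p with
  | zero => simp [ha0, hx0]
  | succ p ih =>
    have hgap := ih (fun n hn => ha n (by omega)) (fun n hn => hstep n (by omega))
    set v := x (p + 1) - x p
    have hexp : Real.exp (-(x (p + 1) / D)) = Real.exp (-(x p / D)) * Real.exp (-(v / D)) := by
      rw [← Real.exp_add]
      congr 1
      field_simp
      ring
    have hlin : 1 - v / D ≤ Real.exp (-(v / D)) := by linarith [Real.add_one_le_exp (-(v / D))]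
    have hgain : (S - a p) * (v / D) ≤ a (p + 1) - a p := by
      rw [mul_div_assoc', div_le_iff₀ hD]
      exact hstep p (by omega)
    have hR : 0 ≤ S * Real.exp (-(x p / D)) * Real.exp (-(v / D)) := by positivity
    rw [hexp, ← mul_assoc]
    -- `S - a (p + 1) ≤ (S - a p) (1 - v / D)` and `1 - v / D ≤ exp (-v / D)`
    rcases le_or_gt (S - a p) 0 with hφ | hφ
    · linarith [ha p (by omega)]
    rcases le_or_gt (1 - v / D) 0 with hv | hv
    · nlinarith
    calc S - a (p + 1) ≤ (S - a p) * (1 - v / D) := by linarith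
      _ ≤ S * Real.exp (-(x p / D)) * (1 - v / D) := mul_le_mul_of_nonneg_right hgap hv.le
      _ ≤ S * Real.exp (-(x p / D)) * Real.exp (-(v / D)) :=
        mul_le_mul_of_nonneg_left hlin (by positivity)

namespace GreedyExec

variable [DecidableEq α] {E : Finset α} {F : Finset α → ℝ} {w : α → ℝ} {W : ℝ}
  (g : GreedyExec E F w W)

theorem sol_succ {i : ℕ} (hi : i < g.order.length) :
    g.sol (i + 1) = g.sol i ∨
      wt w (g.sol i) + w g.order[i] ≤ W ∧ g.sol (i + 1) = insert g.order[i] (g.sol i) := by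
  rcases le_or_gt (wt w (g.sol i) + w g.order[i]) W with h | h
  · exact Or.inr ⟨h, g.step_add i hi h⟩
  · exact Or.inl (g.step_skip i hi h)

theorem getElem_notMem_take {i j : ℕ} (hij : i ≤ j) (hj : j < g.order.length) :
    g.order[j] ∉ (g.order.take i).toFinset := by
  intro hmem
  obtain ⟨k, hk, hkj⟩ := List.mem_take_iff_getElem.1 (List.mem_toFinset.1 hmem)
  have := (g.nodup.getElem_inj_iff).1 hkj
  omega

theorem sol_subset_take {i : ℕ} (hi : i ≤ g.order.length) :
    g.sol i ⊆ (g.order.take i).toFinset := by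
  induction i with
  | zero => simp [g.sol_zero]
  | succ i ih =>
    have htake : (g.order.take i).toFinset ⊆ (g.order.take (i + 1)).toFinset := fun x hx => by
      simpa using List.take_subset_take_left _ (by omega) (List.mem_toFinset.1 hx)
    rcases g.sol_succ (by omega : i < g.order.length) with h | ⟨-, h⟩
    · exact h ▸ (ih (by omega)).trans htake
    · rw [h, insert_subset_iff, List.mem_toFinset]
      exact ⟨List.mem_take_iff_getElem.2 ⟨i, by omega, rfl⟩, (ih (by omega)).trans htake⟩

theorem sol_subset {i : ℕ} (hi : i ≤ g.order.length) : g.sol i ⊆ E := fun x hx => by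
  rw [← g.ground, List.mem_toFinset]
  exact List.take_subset _ _ (List.mem_toFinset.1 (g.sol_subset_take hi hx))

theorem out_subset : g.out ⊆ E := g.sol_subset le_rfl

theorem sol_subset_sol_succ {i : ℕ} (hi : i < g.order.length) : g.sol i ⊆ g.sol (i + 1) := by
  rcases g.sol_succ hi with h | ⟨-, h⟩ <;> rw [h]
  exact subset_insert _ _

theorem getElem_notMem_sol {i : ℕ} (hi : i < g.order.length) : g.order[i] ∉ g.sol i :=
  fun h => g.getElem_notMem_take le_rfl hi (g.sol_subset_take hi.le h)

/-- Steps after the `i`-th only add elements beyond position `i`. -/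
theorem out_inter_take {i : ℕ} (hi : i ≤ g.order.length) :
    g.out ∩ (g.order.take i).toFinset = g.sol i := by
  suffices ∀ j, i ≤ j → j ≤ g.order.length → g.sol j ∩ (g.order.take i).toFinset = g.sol i from
    this _ hi le_rfl
  intro j hij
  induction j, hij using Nat.le_induction with
  | base => exact fun _ => inter_eq_left.2 (g.sol_subset_take hi)
  | succ j hij ih =>
    intro hj
    rcases g.sol_succ (by omega : j < g.order.length) with h | ⟨-, h⟩
    · rw [h, ih (by omega)]
    · rw [h, insert_inter_of_notMem (g.getElem_notMem_take hij (by omega)), ih (by omega)]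

theorem sol_subset_out {i : ℕ} (hi : i ≤ g.order.length) : g.sol i ⊆ g.out :=
  g.out_inter_take hi ▸ inter_subset_left

theorem lt_wt_of_getElem_notMem_out {i : ℕ} (hi : i < g.order.length)
    (hout : g.order[i] ∉ g.out) : W < wt w (g.sol i) + w g.order[i] := by
  by_contra! hfit
  exact hout (g.sol_subset_out hi (g.step_add i hi hfit ▸ mem_insert_self _ _))

theorem marginal_div_le_of_notMem_take {i : ℕ} (hi : i < g.order.length) {y : α} (hyE : y ∈ E)
    (hy : y ∉ (g.order.take i).toFinset) :
    marginal F (g.sol i) {y} / w y ≤ marginal F (g.sol i) {g.order[i]} / w g.order[i] := by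
  have hy' : y ∈ g.order.take i ++ g.order.drop i := by
    rw [List.take_append_drop, ← List.mem_toFinset, g.ground]
    exact hyE
  simpa using g.greedy_max i hi y ((List.mem_append.1 hy').resolve_left (by simpa using hy))

/-- Elements of `T` outside `sol i` have not been considered yet, so each has density at most that
of `order[i]`; submodularity then bounds `F T - F (sol i)` by that density times `w(T)`. -/
theorem gap_mul_wt_le_gain_mul_wt (hmono : MonotoneOnSets E F) (hsub : SubmodularOn E F)
    (hw : ∀ e ∈ E, 0 < w e) {T : Finset α} (hTE : T ⊆ E) {i : ℕ} (hi : i < g.order.length)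
    (hT : T ∩ (g.order.take i).toFinset ⊆ g.sol i) :
    (F T - F (g.sol i)) * (wt w (g.sol (i + 1)) - wt w (g.sol i)) ≤
      (F (g.sol (i + 1)) - F (g.sol i)) * wt w T := by
  rcases g.sol_succ hi with h | ⟨-, h⟩
  · simp [h]
  set U := g.sol i
  set e := g.order[i]
  have hUE : U ⊆ E := g.sol_subset hi.le
  have heE : e ∈ E := by rw [← g.ground, List.mem_toFinset]; exact List.getElem_mem hi
  have hwe := hw e heE
  have hmarg_nonneg : ∀ x ∈ E, 0 ≤ marginal F U {x} := fun x hx => by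
    have := hmono U (U ∪ {x}) subset_union_left (union_subset hUE (by simpa using hx))
    simp only [marginal]
    linarith
  set ρ := marginal F U {e} / w e
  have hdensity : ∀ y ∈ T, marginal F U {y} ≤ ρ * w y := by
    intro y hyT
    have hwy := hw y (hTE hyT)
    by_cases hyU : y ∈ U
    · have : marginal F U {y} = 0 := by simp [marginal, hyU]
      rw [this]
      exact mul_nonneg (div_nonneg (hmarg_nonneg e heE) hwe.le) hwy.le
    · have hy : y ∉ (g.order.take i).toFinset := fun hy => hyU (hT (mem_inter.2 ⟨hyT, hy⟩))
      exact (div_le_iff₀ hwy).1 (g.marginal_div_le_of_notMem_take hi (hTE hyT) hy)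
  have hgap : F T - F U ≤ ρ * wt w T := calc
    F T - F U ≤ marginal F U T := by
      have := hmono T (U ∪ T) subset_union_right (union_subset hUE hTE)
      simp only [marginal]
      linarith
    _ ≤ ∑ y ∈ T, marginal F U {y} := hsub.marginal_le_sum U (union_subset hUE hTE)
    _ ≤ ∑ y ∈ T, ρ * w y := sum_le_sum hdensity
    _ = ρ * wt w T := by rw [wt, mul_sum]
  have hwt : wt w (insert e U) - wt w U = w e := by
    rw [wt, wt, sum_insert (g.getElem_notMem_sol hi)]
    ring
  have hgain : F (insert e U) - F U = marginal F U {e} := by simp [marginal, union_singleton]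
  rw [h, hwt, hgain]
  calc (F T - F U) * w e ≤ ρ * wt w T * w e := mul_le_mul_of_nonneg_right hgap hwe.le
    _ = marginal F U {e} * wt w T := by rw [div_mul_eq_mul_div, div_mul_cancel₀ _ hwe.ne']

theorem exists_first_rejected {T : Finset α} (hTE : T ⊆ E) (hT : ¬T ⊆ g.out) :
    ∃ p, ∃ hp : p < g.order.length, g.order[p] ∈ T ∧ g.order[p] ∉ g.out ∧
      T ∩ (g.order.take p).toFinset ⊆ g.out := by
  classical
  have hex : ∃ p, ∃ hp : p < g.order.length, g.order[p] ∈ T ∧ g.order[p] ∉ g.out := by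
    obtain ⟨x, hxT, hxout⟩ := not_subset.1 hT
    have hx : x ∈ g.order := by rw [← List.mem_toFinset, g.ground]; exact hTE hxT
    obtain ⟨p, hp, rfl⟩ := List.mem_iff_getElem.1 hx
    exact ⟨p, hp, hxT, hxout⟩
  obtain ⟨hp, heT, hout⟩ := Nat.find_spec hex
  refine ⟨Nat.find hex, hp, heT, hout, fun y hy => ?_⟩
  obtain ⟨hyT, hy⟩ := mem_inter.1 hy
  obtain ⟨j, hj, rfl⟩ := List.mem_take_iff_getElem.1 (List.mem_toFinset.1 hy)
  by_contra hjout
  exact Nat.find_min hex (lt_min_iff.1 hj).1 ⟨(lt_min_iff.1 hj).2, hyT, hjout⟩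

/-- When greedy rejects `e`, its solution already weighs more than `T.erase e`, so the gap to
`F (T.erase e)` has decayed by a factor `e⁻¹`. -/
theorem approx_erase_of_first_rejected (hmono : MonotoneOnSets E F) (hsub : SubmodularOn E F)
    (hw : ∀ e ∈ E, 0 < w e) {T : Finset α} (hTE : T ⊆ E) (hTW : wt w T ≤ W) {p : ℕ}
    (hp : p < g.order.length) (heT : g.order[p] ∈ T) (hout : g.order[p] ∉ g.out)
    (hfirst : T ∩ (g.order.take p).toFinset ⊆ g.out) :
    (1 - Real.exp (-1)) * (F (T.erase g.order[p]) - F ∅) ≤ F g.out - F ∅ := by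
  set T' := T.erase g.order[p]
  have hT'E : T' ⊆ E := (erase_subset _ _).trans hTE
  have hFout : F (g.sol p) ≤ F g.out := hmono _ _ (g.sol_subset_out hp.le) g.out_subset
  have hS : F ∅ ≤ F T' := hmono _ _ (empty_subset _) hT'E
  rcases T'.eq_empty_or_nonempty with hT' | hT'
  · simpa [hT'] using hmono _ _ (empty_subset _) g.out_subset
  have hD : 0 < wt w T' := sum_pos (fun y hy => hw y (hT'E hy)) hT'
  have hwT : w g.order[p] + wt w T' = wt w T := add_sum_erase T w heT
  have hDx : wt w T' < wt w (g.sol p) := by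
    linarith [g.lt_wt_of_getElem_notMem_out hp hout]
  have hstep : ∀ n < p, (F T' - F ∅ - (F (g.sol n) - F ∅)) *
      (wt w (g.sol (n + 1)) - wt w (g.sol n)) ≤
      (F (g.sol (n + 1)) - F ∅ - (F (g.sol n) - F ∅)) * wt w T' := by
    intro n hn
    simp only [sub_sub_sub_cancel_right]
    refine g.gap_mul_wt_le_gain_mul_wt hmono hsub hw hT'E (by omega) fun y hy => ?_
    obtain ⟨hyT', hyn⟩ := mem_inter.1 hy
    have hyp : y ∈ (g.order.take p).toFinset := by
      simpa using List.take_subset_take_left _ hn.le (List.mem_toFinset.1 hyn)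
    rw [← g.out_inter_take (by omega)]
    exact mem_inter.2 ⟨hfirst (mem_inter.2 ⟨mem_of_mem_erase hyT', hyp⟩), hyn⟩
  have hdecay := sub_le_mul_exp_of_gap_mul_le (a := fun n => F (g.sol n) - F ∅)
    (x := fun n => wt w (g.sol n)) hD (sub_nonneg.2 hS) (by simp [g.sol_zero])
    (by simp [g.sol_zero, wt]) (fun n hn => by
      have := hmono _ _ (g.sol_subset_sol_succ (i := n) (by omega)) (g.sol_subset (by omega))
      linarith) hstep
  have hexp : Real.exp (-(wt w (g.sol p) / wt w T')) ≤ Real.exp (-1) :=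
    Real.exp_le_exp.2 (neg_le_neg ((one_le_div hD).2 hDx.le))
  have := mul_le_mul_of_nonneg_left hexp (sub_nonneg.2 hS)
  linarith

theorem exists_mem_approx_erase (hmono : MonotoneOnSets E F) (hsub : SubmodularOn E F)
    (hw : ∀ e ∈ E, 0 < w e) {T : Finset α} (hTE : T ⊆ E) (hTW : wt w T ≤ W) (hT : T.Nonempty) :
    ∃ e ∈ T, (1 - Real.exp (-1)) * (F (T.erase e) - F ∅) ≤ F g.out - F ∅ := by
  by_cases hTout : T ⊆ g.out
  · obtain ⟨e, he⟩ := hT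
    refine ⟨e, he, ?_⟩
    have h₁ := hmono ∅ (T.erase e) (empty_subset _) ((erase_subset e T).trans hTE)
    have h₂ := hmono (T.erase e) g.out ((erase_subset e T).trans hTout) g.out_subset
    nlinarith [Real.exp_pos (-1)]
  obtain ⟨p, hp, heT, hout, hfirst⟩ := g.exists_first_rejected hTE hTout
  exact ⟨_, heT, g.approx_erase_of_first_rejected hmono hsub hw hTE hTW hp heT hout hfirst⟩

end GreedyExec

theorem GreedyExec.one_sub_exp_neg_one_mul_le [DecidableEq α] {E Y G : Finset α}
    {f : Finset α → ℝ} {w : α → ℝ} {W : ℝ} (hf0 : NonnegOn E f) (hmono : MonotoneOnSets E f)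
    (hsub : SubmodularOn E f) (hw : ∀ e ∈ E, 0 < w e) (hY : Y ⊆ E) (hYW : wt w Y ≤ W)
    (hGY : G ⊆ Y) (hcap : ∀ y ∈ Y \ G, marginal f G {y} ≤ f G / 2)
    (g : GreedyExec E (marginal f G) w (W - wt w G)) :
    (1 - Real.exp (-1)) * f Y ≤ f (G ∪ g.out) := by
  have hGE : G ⊆ E := hGY.trans hY
  have hGoutE : G ∪ g.out ⊆ E := union_subset hGE g.out_subset
  have hTE : Y \ G ⊆ E := sdiff_subset.trans hY
  have hexp_le : Real.exp (-1) ≤ 1 := Real.exp_le_one_iff.2 (by norm_num)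
  rcases (Y \ G).eq_empty_or_nonempty with hT | hT
  · have := hmono Y (G ∪ g.out) ((sdiff_eq_empty_iff_subset.1 hT).trans subset_union_left) hGoutE
    nlinarith [hf0 Y hY, Real.exp_pos (-1)]
  have hTW : wt w (Y \ G) ≤ W - wt w G := by
    have := sum_sdiff hGY (f := w)
    rw [wt, wt] at *
    linarith
  obtain ⟨e, he, happrox⟩ :=
    g.exists_mem_approx_erase (hmono.marginal hGE) (hsub.marginal hGE) hw hTE hTW hT
  simp only [marginal, union_empty, sub_self, sub_zero] at happrox
  set T' := (Y \ G).erase e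
  have hT'E : G ∪ T' ⊆ E := union_subset hGE ((erase_subset _ _).trans hTE)
  have hY' : f Y ≤ f (G ∪ T') + f G / 2 := by
    have hYeq : G ∪ T' ∪ {e} = Y := by
      rw [union_singleton, ← union_insert, insert_erase he, union_sdiff_of_subset hGY]
    have := (hsub.marginal_singleton_anti subset_union_left hT'E (hTE he)
      (by simp [T', (mem_sdiff.1 he).2])).trans (hcap e he)
    rw [marginal, hYeq] at this
    linarith
  have hexp_ge : 1 / 3 ≤ Real.exp (-1) := by
    rw [Real.exp_neg, one_div]
    exact inv_anti₀ (Real.exp_pos 1) (by linarith [Real.exp_one_lt_d9])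
  nlinarith [mul_le_mul_of_nonneg_left hY' (sub_nonneg.2 hexp_le), hf0 G hGE]

theorem enum_greedy_two_approximation_general [DecidableEq α] (E : Finset α) (f : Finset α → ℝ)
    (w : α → ℝ) (W : ℝ)
    (hf0 : NonnegOn E f) (hmono : MonotoneOnSets E f) (hsub : SubmodularOn E f)
    (hw : ∀ e ∈ E, 0 < w e)
    (Y : Finset α) (hY : Y ⊆ E) (hYfeas : wt w Y ≤ W) :
    ∃ G ⊆ E, G.card ≤ 2 ∧ wt w G ≤ W ∧
      ∀ g : GreedyExec E (fun S => f (G ∪ S) - f G) w (W - wt w G),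
        (1 - Real.exp (-1)) * f Y ≤ f (G ∪ g.out) := by
  obtain ⟨G, hGY, hcard, hcap⟩ :=
    exists_subset_card_le_two_marginal_le_half hsub (hf0 ∅ (empty_subset E)) hY
  have hGW : wt w G ≤ W :=
    (sum_le_sum_of_subset_of_nonneg hGY fun e he _ => (hw e (hY he)).le).trans hYfeas
  exact ⟨G, hGY.trans hY, hcard, hGW,
    fun g => g.one_sub_exp_neg_one_mul_le hf0 hmono hsub hw hY hYfeas hGY hcap⟩

/-- Theorem 1.1 / Lemma 3.1: enumeration over pairs suffices for a
`(1 - e⁻¹)`-approximation. For every MSK instance `(E, f, w, W)` and feasible `Y ⊆ E`,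
there is `G ⊆ E` with `|G| ≤ 2` and `w(G) ≤ W` such that every greedy execution on the
instance `(E, f_G, w, W - w(G))` with output `A` satisfies
`f(G ∪ A) ≥ (1 - e⁻¹)·f(Y)`. -/
theorem enum_greedy_two_approximation [DecidableEq α] (E : Finset α) (f : Finset α → ℝ)
    (w : α → ℝ) (W : ℝ)
    (hf0 : NonnegOn E f) (hmono : MonotoneOnSets E f) (hsub : SubmodularOn E f)
    (hw : ∀ e ∈ E, 0 < w e) (hW : 0 ≤ W)
    (Y : Finset α) (hY : Y ⊆ E) (hYfeas : wt w Y ≤ W) :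
    ∃ G ⊆ E, G.card ≤ 2 ∧ wt w G ≤ W ∧
      ∀ g : GreedyExec E (fun S => f (G ∪ S) - f G) w (W - wt w G),
        (1 - Real.exp (-1)) * f Y ≤ f (G ∪ g.out) :=
  enum_greedy_two_approximation_general E f w W hf0 hmono hsub hw Y hY hYfeas
end
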